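/- arXiv:1607.04407 — 2 statements merged into one kernel-verified Lean document; each statement's English description precedes it below -/
import Mathlib

section
/- Theorem 3(3) (existence of the estimator Â_i^{(c)}). Fix a real number z, y ∈ ℝ^m, and an index i with 1 ≤ i ≤ m. If m > p + 4, then the function f(A) = A^{(1+z²)/4} · (A+D_i)^{(7−z²)/4} · L_RE(A), defined for A ∈ (0,∞), attains its supremum on (0,∞): there exists Â > 0 such that f(A) ≤ f(Â) for all A > 0. -/
open Matrix Real Filter

/-- The diagonal covariance matrix `V(A) = diag(A + D₁, …, A + D_m)`. -/
noncomputable def Vmat {m : ℕ} (D : Fin m → ℝ) (A : ℝ) : Matrix (Fin m) (Fin m) ℝ :=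
  Matrix.diagonal (fun i => A + D i)

/-- The residual projection matrix `P(A) = V⁻¹ − V⁻¹X(XᵀV⁻¹X)⁻¹XᵀV⁻¹`. -/
noncomputable def Pmat {m p : ℕ} (X : Matrix (Fin m) (Fin p) ℝ) (D : Fin m → ℝ) (A : ℝ) :
    Matrix (Fin m) (Fin m) ℝ :=
  (Vmat D A)⁻¹ - (Vmat D A)⁻¹ * X * (Xᵀ * (Vmat D A)⁻¹ * X)⁻¹ * Xᵀ * (Vmat D A)⁻¹

/-- The residual likelihood
`L_RE(A) = det(XᵀV⁻¹X)^{−1/2} · det(V)^{−1/2} · exp(−yᵀP y/2)`. -/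
noncomputable def LRE {m p : ℕ} (X : Matrix (Fin m) (Fin p) ℝ) (D : Fin m → ℝ)
    (y : Fin m → ℝ) (A : ℝ) : ℝ :=
  (Xᵀ * (Vmat D A)⁻¹ * X).det ^ (-(1 : ℝ) / 2) * (Vmat D A).det ^ (-(1 : ℝ) / 2) *
    Real.exp (-(y ⬝ᵥ (Pmat X D A *ᵥ y)) / 2)

/-!
Write the objective as `f A = A ^ a * (A + D i) ^ b * L_RE A` with `a = (1 + z²)/4 > 0` and
`a + b = 2`. Since `P` is positive semidefinite, `L_RE A ≤ det(XᵀV⁻¹X)^{-1/2} det(V)^{-1/2}`.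
Because `V(0)` is already positive definite, `f` is continuous on `[0, ∞)` with `f 0 = 0`. For large
`A`, `det V ≥ A^m`, and `det(XᵀV⁻¹X) ≥ c A^{-p}` because the weights `A/(A + D j)` stay in
`[1/2, 1]`, a compact box on which the weighted Gram determinant is bounded below. Hence
`f A = O(A^{2 + (p - m)/2}) → 0` since `m > p + 4`, and a positive continuous function on `(0, ∞)`
vanishing at both ends attains its maximum.
-/

open Set Topology

theorem Matrix.mulVec_injective_of_rank_eq {m n K : Type*} [Fintype n] [Field K]
    {A : Matrix m n K} (h : A.rank = Fintype.card n) : Function.Injective A.mulVec := by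
  have hker := LinearMap.finrank_range_add_finrank_ker A.mulVecLin
  rw [show Module.finrank K (LinearMap.range A.mulVecLin) = _ from h,
    Module.finrank_fintype_fun_eq_card] at hker
  have hker0 : Module.finrank K (LinearMap.ker A.mulVecLin) = 0 := by omega
  exact LinearMap.ker_eq_bot.mp (Submodule.finrank_eq_zero.mp hker0)

theorem Matrix.continuousAt_inv_of_det_ne_zero {n 𝕜 : Type*} [Fintype n] [DecidableEq n]
    [Field 𝕜] [TopologicalSpace 𝕜] [IsTopologicalDivisionRing 𝕜]
    {A : Matrix n n 𝕜} (h : A.det ≠ 0) : ContinuousAt Inv.inv A :=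
  continuousAt_matrix_inv A (by rw [Ring.inverse_eq_inv']; exact continuousAt_inv₀ h)

/-- `P V P = P` with `P` symmetric, so `P = Pᵀ V P` is positive semidefinite. -/
theorem Matrix.PosDef.posSemidef_inv_sub_inv_mul_mul_inv_mul_inv {n k : Type*}
    [Fintype n] [DecidableEq n] [Fintype k] [DecidableEq k] {V : Matrix n n ℝ} (hV : V.PosDef)
    (X : Matrix n k ℝ) (hM : IsUnit (Xᵀ * V⁻¹ * X).det) :
    (V⁻¹ - V⁻¹ * X * (Xᵀ * V⁻¹ * X)⁻¹ * Xᵀ * V⁻¹).PosSemidef := by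
  set M := Xᵀ * V⁻¹ * X with hM_def
  set P := V⁻¹ - V⁻¹ * X * M⁻¹ * Xᵀ * V⁻¹
  have hVinv : (V⁻¹)ᵀ = V⁻¹ := by
    simpa [conjTranspose_eq_transpose_of_trivial] using hV.inv.isHermitian.eq
  have hMinv : (M⁻¹)ᵀ = M⁻¹ := by
    rw [transpose_nonsing_inv, hM_def]
    simp only [transpose_mul, transpose_transpose, hVinv, Matrix.mul_assoc]
  have hVV : V * V⁻¹ = 1 := mul_nonsing_inv V hV.det_pos.ne'.isUnit
  have hVV' : ∀ B : Matrix n n ℝ, V⁻¹ * (V * B) = B := fun B => by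
    rw [← Matrix.mul_assoc, nonsing_inv_mul V hV.det_pos.ne'.isUnit, Matrix.one_mul]
  have hMM : ∀ B : Matrix k n ℝ, M⁻¹ * (Xᵀ * (V⁻¹ * (X * B))) = B := fun B => by
    rw [← Matrix.mul_assoc Xᵀ, ← Matrix.mul_assoc (Xᵀ * V⁻¹), ← hM_def, ← Matrix.mul_assoc,
      nonsing_inv_mul M hM, Matrix.one_mul]
  have hPsymm : Pᵀ = P := by
    simp only [P, transpose_sub, transpose_mul, transpose_transpose, hVinv, hMinv,
      Matrix.mul_assoc]
  have hPVP : P * V * P = P := by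
    simp only [P, Matrix.sub_mul, Matrix.mul_sub, Matrix.mul_assoc, hVV', hMM, hVV,
      Matrix.mul_one]
    abel
  have := hV.posSemidef.conjTranspose_mul_mul_same P
  rwa [conjTranspose_eq_transpose_of_trivial, hPsymm, hPVP] at this

theorem exists_pos_le_det_transpose_mul_diagonal_mul {n k : Type*} [Fintype n] [DecidableEq n]
    [Fintype k] [DecidableEq k] {X : Matrix n k ℝ} (hX : Function.Injective X.mulVec)
    {lo hi : n → ℝ} (hlo : ∀ j, 0 < lo j) :
    ∃ c > 0, ∀ w ∈ Icc lo hi, c ≤ (Xᵀ * diagonal w * X).det := by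
  rcases (Icc lo hi).eq_empty_or_nonempty with hempty | hne
  · exact ⟨1, one_pos, by simp [hempty]⟩
  have hpos : ∀ w ∈ Icc lo hi, 0 < (Xᵀ * diagonal w * X).det := fun w hw => by
    simpa [conjTranspose_eq_transpose_of_trivial] using
      ((PosDef.diagonal fun j => (hlo j).trans_le (hw.1 j)).conjTranspose_mul_mul_same hX).det_pos
  obtain ⟨w₀, hw₀, hmin⟩ := isCompact_Icc.exists_isMinOn hne
    (by fun_prop : Continuous fun w : n → ℝ => (Xᵀ * diagonal w * X).det).continuousOn
  exact ⟨_, hpos w₀ hw₀, fun w hw => hmin hw⟩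

theorem exists_pos_forall_le_of_tendsto_nhdsGT_atTop {f : ℝ → ℝ} (hf : ContinuousOn f (Ioi 0))
    {l : ℝ} (h0 : Tendsto f (𝓝[>] 0) (𝓝 l)) (htop : Tendsto f atTop (𝓝 l)) {x₀ : ℝ}
    (hx₀ : 0 < x₀) (hl : l < f x₀) : ∃ x, 0 < x ∧ ∀ y, 0 < y → f y ≤ f x := by
  have hexp : Continuous (f ∘ exp) := hf.comp_continuous continuous_exp exp_pos
  have hev : ∀ᶠ t in cocompact ℝ, (f ∘ exp) t ≤ (f ∘ exp) (log x₀) := by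
    rw [Function.comp_apply, exp_log hx₀, cocompact_eq_atBot_atTop, eventually_sup]
    exact ⟨tendsto_exp_atBot_nhdsGT.eventually (h0.eventually (ge_mem_nhds hl)),
      tendsto_exp_atTop.eventually (htop.eventually (ge_mem_nhds hl))⟩
  obtain ⟨t, ht⟩ := hexp.exists_forall_ge' (log x₀) hev
  exact ⟨exp t, exp_pos t, fun y hy => by simpa [exp_log hy] using ht (log y)⟩

theorem rpow_mul_add_rpow_le {a b x d : ℝ} (ha : 0 ≤ a) (hab : 0 ≤ a + b) (hx : 0 < x)
    (hd : 0 ≤ d) (hdx : d ≤ x) : x ^ a * (x + d) ^ b ≤ 2 ^ (a + b) * x ^ (a + b) :=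
  calc x ^ a * (x + d) ^ b ≤ (x + d) ^ a * (x + d) ^ b :=
        mul_le_mul_of_nonneg_right (rpow_le_rpow hx.le (by linarith) ha) (by positivity)
    _ = (x + d) ^ (a + b) := (rpow_add (by positivity) a b).symm
    _ ≤ (2 * x) ^ (a + b) := rpow_le_rpow (by positivity) (by linarith) hab
    _ = 2 ^ (a + b) * x ^ (a + b) := mul_rpow zero_le_two hx.le

section ResidualLikelihood

variable {m p : ℕ} {X : Matrix (Fin m) (Fin p) ℝ} {D : Fin m → ℝ} {A : ℝ}

theorem det_Vmat : (Vmat D A).det = ∏ j, (A + D j) := det_diagonal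

theorem inv_Vmat (hA : ∀ j, A + D j ≠ 0) :
    (Vmat D A)⁻¹ = diagonal fun j => (A + D j)⁻¹ :=
  inv_eq_right_inv (by simp [Vmat, hA])

theorem pow_le_det_Vmat (hD : ∀ j, 0 ≤ D j) (hA : 0 ≤ A) : A ^ m ≤ (Vmat D A).det :=
  calc A ^ m = ∏ _j : Fin m, A := by simp
    _ ≤ (Vmat D A).det := det_Vmat (D := D) ▸
      Finset.prod_le_prod (fun _ _ => hA) fun j _ => le_add_of_nonneg_right (hD j)

theorem posDef_Vmat (hA : ∀ j, 0 < A + D j) : (Vmat D A).PosDef := PosDef.diagonal hA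

theorem continuous_Vmat : Continuous (Vmat D) :=
  (continuous_pi fun _ => continuous_id.add continuous_const).matrix_diagonal

theorem posDef_transpose_mul_inv_Vmat_mul (hX : Function.Injective X.mulVec)
    (hA : ∀ j, 0 < A + D j) : (Xᵀ * (Vmat D A)⁻¹ * X).PosDef := by
  simpa [conjTranspose_eq_transpose_of_trivial] using
    (posDef_Vmat hA).inv.conjTranspose_mul_mul_same hX

theorem dotProduct_Pmat_mulVec_nonneg (hX : Function.Injective X.mulVec)
    (hA : ∀ j, 0 < A + D j) (y : Fin m → ℝ) : 0 ≤ y ⬝ᵥ (Pmat X D A *ᵥ y) := by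
  have := ((posDef_Vmat hA).posSemidef_inv_sub_inv_mul_mul_inv_mul_inv X
    (posDef_transpose_mul_inv_Vmat_mul hX hA).det_pos.ne'.isUnit).dotProduct_mulVec_nonneg y
  rwa [star_trivial] at this

theorem LRE_pos (hX : Function.Injective X.mulVec) (hA : ∀ j, 0 < A + D j)
    (y : Fin m → ℝ) : 0 < LRE X D y A := by
  have := (posDef_transpose_mul_inv_Vmat_mul hX hA).det_pos
  have := (posDef_Vmat hA).det_pos
  unfold LRE
  positivity

theorem LRE_le (hX : Function.Injective X.mulVec) (hA : ∀ j, 0 < A + D j) (y : Fin m → ℝ)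
    {c d : ℝ} (hc : 0 < c) (hd : 0 < d) (hcM : c ≤ (Xᵀ * (Vmat D A)⁻¹ * X).det)
    (hdV : d ≤ (Vmat D A).det) :
    LRE X D y A ≤ c ^ (-(1 : ℝ) / 2) * d ^ (-(1 : ℝ) / 2) := by
  have hexp : exp (-(y ⬝ᵥ (Pmat X D A *ᵥ y)) / 2) ≤ 1 := by
    rw [exp_le_one_iff]
    linarith [dotProduct_Pmat_mulVec_nonneg hX hA y]
  have := (posDef_Vmat hA).det_pos
  unfold LRE
  calc _ ≤ c ^ (-(1 : ℝ) / 2) * d ^ (-(1 : ℝ) / 2) * 1 := by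
        refine mul_le_mul (mul_le_mul ?_ ?_ (by positivity) (by positivity)) hexp
          (by positivity) (by positivity)
        · exact rpow_le_rpow_of_nonpos hc hcM (by norm_num)
        · exact rpow_le_rpow_of_nonpos hd hdV (by norm_num)
    _ = _ := mul_one _

theorem continuousAt_LRE (hX : Function.Injective X.mulVec) (hA : ∀ j, 0 < A + D j)
    (y : Fin m → ℝ) : ContinuousAt (LRE X D y) A := by
  have hVinv : ContinuousAt (fun B => (Vmat D B)⁻¹) A :=
    (continuousAt_inv_of_det_ne_zero (posDef_Vmat hA).det_pos.ne').comp
      continuous_Vmat.continuousAt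
  have hM : ContinuousAt (fun B => Xᵀ * (Vmat D B)⁻¹ * X) A := by fun_prop
  have hMdet := (posDef_transpose_mul_inv_Vmat_mul hX hA).det_pos.ne'
  have hMinv : ContinuousAt (fun B => (Xᵀ * (Vmat D B)⁻¹ * X)⁻¹) A :=
    (continuousAt_inv_of_det_ne_zero hMdet).comp (f := fun B => Xᵀ * (Vmat D B)⁻¹ * X) hM
  have hq : ContinuousAt (fun B => y ⬝ᵥ (Pmat X D B *ᵥ y)) A := by unfold Pmat; fun_prop
  have hMdetc : ContinuousAt (fun B => (Xᵀ * (Vmat D B)⁻¹ * X).det) A := by fun_prop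
  exact ((hMdetc.rpow_const (Or.inl hMdet)).mul
    (continuous_Vmat.matrix_det.continuousAt.rpow_const
      (Or.inl (posDef_Vmat hA).det_pos.ne'))).mul (hq.neg.div_const 2).rexp

theorem eventually_le_det_transpose_mul_inv_Vmat_mul (hX : Function.Injective X.mulVec)
    (hD : ∀ j, 0 ≤ D j) :
    ∃ c > 0, ∀ᶠ A in atTop, c * A ^ (-(p : ℝ)) ≤ (Xᵀ * (Vmat D A)⁻¹ * X).det := by
  obtain ⟨c, hc, hcw⟩ := exists_pos_le_det_transpose_mul_diagonal_mul hX
    (lo := fun _ => 1 / 2) (hi := fun _ => 1) (fun _ => one_half_pos)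
  refine ⟨c, hc, ?_⟩
  filter_upwards [eventually_gt_atTop 0, eventually_all.2 fun j => eventually_ge_atTop (D j)]
    with A hA hDA
  have hAD : ∀ j, 0 < A + D j := fun j => add_pos_of_pos_of_nonneg hA (hD j)
  have hw : (fun j => A / (A + D j)) ∈ Icc (fun _ => 1 / 2) fun _ => 1 := by
    refine ⟨fun j => ?_, fun j => ?_⟩
    · rw [le_div_iff₀ (hAD j)]; linarith [hDA j]
    · rw [div_le_one (hAD j)]; linarith [hD j]
  have hVinv : (Vmat D A)⁻¹ = A⁻¹ • diagonal fun j => A / (A + D j) := by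
    rw [inv_Vmat fun j => (hAD j).ne', ← diagonal_smul]
    congr 1; ext j
    rw [Pi.smul_apply, smul_eq_mul, inv_mul_eq_div, div_div_cancel_left' hA.ne']
  rw [hVinv, Matrix.mul_smul, Matrix.smul_mul, det_smul, Fintype.card_fin, rpow_neg hA.le,
    rpow_natCast, inv_pow, mul_comm c]
  exact mul_le_mul_of_nonneg_left (hcw _ hw) (by positivity)

theorem continuousAt_rpow_mul_rpow_mul_LRE (hX : Function.Injective X.mulVec) (y : Fin m → ℝ)
    (i : Fin m) {a b : ℝ} (ha : 0 ≤ a) (hA : ∀ j, 0 < A + D j) :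
    ContinuousAt (fun B => B ^ a * (B + D i) ^ b * LRE X D y B) A :=
  ((continuousAt_rpow_const _ _ (Or.inr ha)).mul
    ((continuousAt_id.add continuousAt_const).rpow_const (Or.inl (hA i).ne'))).mul
    (continuousAt_LRE hX hA y)

theorem tendsto_rpow_mul_rpow_mul_LRE_atTop (hX : Function.Injective X.mulVec)
    (hD : ∀ j, 0 ≤ D j) (y : Fin m → ℝ) (i : Fin m) {a b : ℝ} (ha : 0 ≤ a) (hab : 0 ≤ a + b)
    (hm : 2 * (a + b) + p < m) :
    Tendsto (fun A => A ^ a * (A + D i) ^ b * LRE X D y A) atTop (𝓝 0) := by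
  obtain ⟨c, hc, hcM⟩ := eventually_le_det_transpose_mul_inv_Vmat_mul hX hD
  set δ : ℝ := (m - p) / 2 - (a + b)
  have hδ : 0 < δ := by simp only [δ]; linarith
  have hbound : ∀ᶠ A in atTop,
      A ^ a * (A + D i) ^ b * LRE X D y A ≤ 2 ^ (a + b) * c ^ (-(1 : ℝ) / 2) * A ^ (-δ) := by
    filter_upwards [hcM, eventually_gt_atTop 0,
      eventually_all.2 fun j => eventually_ge_atTop (D j)] with A hcA hA hDA
    have hAD : ∀ j, 0 < A + D j := fun j => add_pos_of_pos_of_nonneg hA (hD j)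
    have hdetV : A ^ (m : ℝ) ≤ (Vmat D A).det := by
      rw [rpow_natCast]; exact pow_le_det_Vmat hD hA.le
    have hLRE : LRE X D y A ≤ c ^ (-(1 : ℝ) / 2) * A ^ (((p : ℝ) - m) / 2) :=
      calc LRE X D y A ≤ (c * A ^ (-(p : ℝ))) ^ (-(1 : ℝ) / 2) * (A ^ (m : ℝ)) ^ (-(1 : ℝ) / 2) :=
            LRE_le hX hAD y (by positivity) (by positivity) hcA hdetV
        _ = c ^ (-(1 : ℝ) / 2) * A ^ (((p : ℝ) - m) / 2) := by
            rw [mul_rpow hc.le (by positivity), ← rpow_mul hA.le, ← rpow_mul hA.le,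
              mul_assoc, ← rpow_add hA]
            ring_nf
    calc A ^ a * (A + D i) ^ b * LRE X D y A
        ≤ 2 ^ (a + b) * A ^ (a + b) * (c ^ (-(1 : ℝ) / 2) * A ^ (((p : ℝ) - m) / 2)) :=
          mul_le_mul (rpow_mul_add_rpow_le ha hab hA (hD i) (hDA i)) hLRE (LRE_pos hX hAD y).le (by positivity)
      _ = 2 ^ (a + b) * c ^ (-(1 : ℝ) / 2) * A ^ (-δ) := by
          rw [show -δ = (a + b) + ((p : ℝ) - m) / 2 by ring, rpow_add hA (a + b)]
          ring
  refine tendsto_of_tendsto_of_tendsto_of_le_of_le' tendsto_const_nhds ?_ ?_ hbound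
  · simpa using (tendsto_rpow_neg_atTop hδ).const_mul (2 ^ (a + b) * c ^ (-(1 : ℝ) / 2))
  · filter_upwards [eventually_gt_atTop 0] with A hA
    have := LRE_pos hX (fun j => add_pos_of_pos_of_nonneg hA (hD j)) y
    have := add_pos_of_pos_of_nonneg hA (hD i)
    positivity

end ResidualLikelihood

theorem c_estimator_exists_general {m p : ℕ}
    (X : Matrix (Fin m) (Fin p) ℝ) (hrank : X.rank = p)
    (D : Fin m → ℝ) (hD : ∀ i, 0 < D i)
    (z : ℝ) (y : Fin m → ℝ) (i : Fin m)
    (hcond : m > p + 4) :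
    ∃ Ahat : ℝ, 0 < Ahat ∧ ∀ A : ℝ, 0 < A →
      A ^ ((1 + z ^ 2) / 4) * (A + D i) ^ ((7 - z ^ 2) / 4) * LRE X D y A ≤
        Ahat ^ ((1 + z ^ 2) / 4) * (Ahat + D i) ^ ((7 - z ^ 2) / 4) * LRE X D y Ahat := by
  have hX : Function.Injective X.mulVec := mulVec_injective_of_rank_eq (by simpa using hrank)
  have ha : 0 < (1 + z ^ 2) / 4 := by positivity
  have hab : (1 + z ^ 2) / 4 + (7 - z ^ 2) / 4 = 2 := by ring
  have hAD : ∀ A : ℝ, 0 ≤ A → ∀ j, 0 < A + D j := fun A hA j => by linarith [hD j]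
  have hcont := fun A hA => continuousAt_rpow_mul_rpow_mul_LRE hX y i (b := (7 - z ^ 2) / 4)
    ha.le (hAD A hA)
  refine exists_pos_forall_le_of_tendsto_nhdsGT_atTop
    (fun A hA => (hcont A hA.le).continuousWithinAt) ?_
    (tendsto_rpow_mul_rpow_mul_LRE_atTop hX (fun j => (hD j).le) y i ha.le (by linarith)
      (by rw [hab]; exact_mod_cast (show 2 * 2 + p < m by omega))) one_pos ?_
  · simpa [zero_rpow ha.ne'] using (hcont 0 le_rfl).tendsto.mono_left nhdsWithin_le_nhds
  · have := LRE_pos hX (hAD 1 zero_le_one) y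
    have := hAD 1 zero_le_one i
    positivity

/-- Theorem 3(3): existence of the estimator `Â_i^{(c)}`.  If `m > p + 4`, then
`A ↦ A^{(1+z²)/4}·(A+D_i)^{(7−z²)/4}·L_RE(A)` attains its supremum on `(0,∞)`. -/
theorem c_estimator_exists {m p : ℕ} (hm : 0 < m) (hp : 0 < p)
    (X : Matrix (Fin m) (Fin p) ℝ) (hrank : X.rank = p)
    (D : Fin m → ℝ) (hD : ∀ i, 0 < D i)
    (z : ℝ) (y : Fin m → ℝ) (i : Fin m)
    (hcond : m > p + 4) :
    ∃ Ahat : ℝ, 0 < Ahat ∧ ∀ A : ℝ, 0 < A →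
      A ^ ((1 + z ^ 2) / 4) * (A + D i) ^ ((7 - z ^ 2) / 4) * LRE X D y A ≤
        Ahat ^ ((1 + z ^ 2) / 4) * (Ahat + D i) ^ ((7 - z ^ 2) / 4) * LRE X D y Ahat :=
  c_estimator_exists_general X hrank D hD z y i hcond
end

section
/- Upper bound on the residual likelihood (key inequality of Appendix A.2). Let D_max = max_{1≤i≤m} D_i and D_min = min_{1≤i≤m} D_i. For every A ≥ 0 and every y ∈ ℝ^m, L_RE(A) ≤ det(XᵀX)^{−1/2} · (A + D_max)^{p/2} · (A + D_min)^{−m/2}. -/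
/-!
The three factors of `L_RE(A)` are bounded separately. The exponential is at most `1` because
`P(A)` is positive semidefinite: it is the Schur complement of `XᵀV⁻¹X` in the Gram matrix
`[X I]ᵀ V⁻¹ [X I]`. Since `V⁻¹ ≥ (A + D_max)⁻¹ I` in the Loewner order and the determinant is
monotone on positive semidefinite matrices, `det (XᵀV⁻¹X) ≥ (A + D_max)⁻ᵖ det (XᵀX)`.
Finally `det V = ∏ (A + D_i) ≥ (A + D_min)ᵐ`.
-/

open Matrix Real Filter

open scoped ComplexOrder

theorem Matrix.PosSemidef.one_le_det_one_add {n : Type*} [Fintype n] [DecidableEq n]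
    {M : Matrix n n ℝ} (hM : M.PosSemidef) : 1 ≤ (1 + M).det := by
  have h : 1 + M = cfc (fun x : ℝ => 1 + x) M := by
    rw [cfc_add .., cfc_const_one ℝ M hM.1.isSelfAdjoint, cfc_id' ℝ M hM.1.isSelfAdjoint]
  rw [h, hM.1.cfc_eq]
  simp only [IsHermitian.cfc, det_map, det_diagonal, Function.comp_apply,
    RCLike.ofReal_real_eq_id, id]
  exact Finset.one_le_prod fun i _ => by linarith [hM.eigenvalues_nonneg i]

open scoped MatrixOrder in
theorem Matrix.PosSemidef.det_le_det_add {n : Type*} [Fintype n] [DecidableEq n]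
    {N S : Matrix n n ℝ} (hN : N.PosSemidef) (hS : S.PosSemidef) : N.det ≤ (N + S).det := by
  by_cases hdet : N.det = 0
  · exact hdet ▸ (hN.add hS).det_nonneg
  set C := CFC.sqrt N
  have hCC : C * C = N := CFC.sqrt_mul_sqrt_self N hN.nonneg
  have hC : IsUnit C.det := by
    refine (isUnit_iff_isUnit_det C).1 (isUnit_of_mul_isUnit_left (y := C) ?_)
    rw [hCC, isUnit_iff_isUnit_det]
    exact isUnit_iff_ne_zero.2 hdet
  have hCS : (C⁻¹ * S * C⁻¹).PosSemidef := by
    have := hS.conjTranspose_mul_mul_same C⁻¹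
    rwa [(CFC.sqrt_nonneg N).posSemidef.1.inv.eq] at this
  have hsplit : N + S = C * (1 + C⁻¹ * S * C⁻¹) * C :=
    calc N + S = C * C + C * C⁻¹ * S * (C⁻¹ * C) := by
          rw [hCC, mul_nonsing_inv C hC, nonsing_inv_mul C hC, Matrix.one_mul, Matrix.mul_one]
    _ = C * (1 + C⁻¹ * S * C⁻¹) * C := by noncomm_ring
  rw [hsplit, det_mul, det_mul, mul_right_comm, ← det_mul, hCC]
  exact le_mul_of_one_le_right hN.det_nonneg hCS.one_le_det_one_add

theorem Matrix.pow_card_mul_det_le_det_transpose_mul_diagonal_mul {n k : Type*}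
    [Fintype n] [Fintype k] [DecidableEq n] [DecidableEq k] (X : Matrix n k ℝ) {w : n → ℝ}
    {c : ℝ} (hc : 0 ≤ c) (hw : ∀ i, c ≤ w i) :
    c ^ Fintype.card k * (Xᵀ * X).det ≤ (Xᵀ * diagonal w * X).det := by
  have hgram : ∀ {d : n → ℝ}, (∀ i, 0 ≤ d i) → (Xᵀ * diagonal d * X).PosSemidef := fun hd => by
    simpa only [conjTranspose_eq_transpose_of_trivial] using
      (PosSemidef.diagonal hd).conjTranspose_mul_mul_same X
  have hsplit : Xᵀ * diagonal w * X
      = Xᵀ * diagonal (fun _ : n => c) * X + Xᵀ * diagonal (fun i => w i - c) * X := by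
    rw [← Matrix.add_mul, ← Matrix.mul_add, diagonal_add]
    simp only [add_sub_cancel]
  have hscalar : (Xᵀ * diagonal (fun _ : n => c) * X).det = c ^ Fintype.card k * (Xᵀ * X).det := by
    rw [← smul_one_eq_diagonal, Matrix.mul_smul, Matrix.mul_one, Matrix.smul_mul, det_smul]
  rw [hsplit, ← hscalar]
  exact (hgram fun _ => hc).det_le_det_add (hgram fun i => sub_nonneg.2 (hw i))

theorem Matrix.PosSemidef.sub_mul_inv_conjTranspose_mul
    {𝕜 n k : Type*} [RCLike 𝕜] [Fintype n] [Fintype k] [DecidableEq n] [DecidableEq k]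
    {W : Matrix n n 𝕜} (hW : W.PosSemidef) (X : Matrix n k 𝕜) (hB : (Xᴴ * W * X).PosDef) :
    (W - W * X * (Xᴴ * W * X)⁻¹ * Xᴴ * W).PosSemidef := by
  have : Invertible (Xᴴ * W * X) := hB.isUnit.invertible
  have hGram : fromBlocks (Xᴴ * W * X) (Xᴴ * W) (Xᴴ * W)ᴴ W
      = (fromCols X 1)ᴴ * W * fromCols X (1 : Matrix n n 𝕜) := by
    rw [conjTranspose_fromCols_eq_fromRows_conjTranspose, conjTranspose_mul, hW.1.eq]
    simp [fromRows_mul, Matrix.mul_assoc]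
  have := hW.conjTranspose_mul_mul_same (fromCols X (1 : Matrix n n 𝕜))
  rw [← hGram, hB.fromBlocks₁₁] at this
  simpa [conjTranspose_mul, hW.1.eq, Matrix.mul_assoc] using this

theorem Matrix.mulVec_injective_of_rank_eq_card {n k : Type*} [Fintype n] [Fintype k]
    {X : Matrix n k ℝ} (hrank : X.rank = Fintype.card k) : Function.Injective X.mulVec := by
  have h := X.mulVecLin.finrank_range_add_finrank_ker
  rw [← rank, hrank, Module.finrank_fintype_fun_eq_card] at h
  have hker : LinearMap.ker X.mulVecLin = ⊥ := Submodule.finrank_eq_zero.mp (by omega)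
  exact LinearMap.ker_eq_bot.mp hker

theorem Vmat_inv {m : ℕ} {D : Fin m → ℝ} {A : ℝ} (hV : ∀ i, A + D i ≠ 0) :
    (Vmat D A)⁻¹ = diagonal fun i => (A + D i)⁻¹ :=
  inv_eq_right_inv <| by simp [Vmat, diagonal_mul_diagonal, hV]

theorem pow_le_det_Vmat_s9 {m : ℕ} {D : Fin m → ℝ} {A r : ℝ} (hr : 0 ≤ r) (hle : ∀ i, r ≤ A + D i) :
    r ^ m ≤ (Vmat D A).det :=
  calc r ^ m = ∏ _i : Fin m, r := by simp
  _ ≤ (Vmat D A).det := by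
    rw [Vmat, det_diagonal]
    exact Finset.prod_le_prod (fun _ _ => hr) fun i _ => hle i

theorem inv_pow_mul_det_le_det_transpose_mul_Vmat_inv_mul {m p : ℕ} (X : Matrix (Fin m) (Fin p) ℝ)
    {D : Fin m → ℝ} {A q : ℝ} (hq : 0 < q) (hV : ∀ i, 0 < A + D i) (hle : ∀ i, A + D i ≤ q) :
    q⁻¹ ^ p * (Xᵀ * X).det ≤ (Xᵀ * (Vmat D A)⁻¹ * X).det := by
  rw [Vmat_inv fun i => (hV i).ne']
  simpa only [Fintype.card_fin] using X.pow_card_mul_det_le_det_transpose_mul_diagonal_mul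
    (inv_pos.2 hq).le fun i => inv_anti₀ (hV i) (hle i)

theorem Pmat_posSemidef {m p : ℕ} {X : Matrix (Fin m) (Fin p) ℝ} (hX : Function.Injective X.mulVec)
    {D : Fin m → ℝ} {A : ℝ} (hV : ∀ i, 0 < A + D i) : (Pmat X D A).PosSemidef := by
  have hW : (Vmat D A)⁻¹.PosDef := by
    rw [Vmat_inv fun i => (hV i).ne']
    exact PosDef.diagonal fun i => inv_pos.2 (hV i)
  have := hW.posSemidef.sub_mul_inv_conjTranspose_mul X (hW.conjTranspose_mul_mul_same hX)
  rw [conjTranspose_eq_transpose_of_trivial] at this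
  exact this

theorem LRE_le_of_le_det {m p : ℕ} {X : Matrix (Fin m) (Fin p) ℝ} {D : Fin m → ℝ} {A b v : ℝ}
    (y : Fin m → ℝ) (hb : 0 < b) (hB : b ≤ (Xᵀ * (Vmat D A)⁻¹ * X).det) (hv : 0 < v)
    (hV : v ≤ (Vmat D A).det) (hP : (Pmat X D A).PosSemidef) :
    LRE X D y A ≤ b ^ (-(1 : ℝ) / 2) * v ^ (-(1 : ℝ) / 2) := by
  have hexp : exp (-(y ⬝ᵥ (Pmat X D A *ᵥ y)) / 2) ≤ 1 := by
    have := hP.dotProduct_mulVec_nonneg y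
    rw [star_trivial] at this
    exact exp_le_one_iff.2 (by linarith)
  calc LRE X D y A
      ≤ (Xᵀ * (Vmat D A)⁻¹ * X).det ^ (-(1 : ℝ) / 2) * (Vmat D A).det ^ (-(1 : ℝ) / 2) :=
        mul_le_of_le_one_right
          (mul_nonneg (rpow_nonneg (hb.trans_le hB).le _) (rpow_nonneg (hv.trans_le hV).le _)) hexp
    _ ≤ b ^ (-(1 : ℝ) / 2) * v ^ (-(1 : ℝ) / 2) :=
        mul_le_mul (rpow_le_rpow_of_nonpos hb hB (by norm_num))
          (rpow_le_rpow_of_nonpos hv hV (by norm_num)) (rpow_nonneg (hv.trans_le hV).le _)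
          (rpow_nonneg hb.le _)

theorem LRE_upper_bound_general {m p : ℕ} (hm : 0 < m)
    (X : Matrix (Fin m) (Fin p) ℝ) (hrank : X.rank = p)
    (D : Fin m → ℝ) (hD : ∀ j, 0 < D j)
    (Dmax Dmin : ℝ)
    (hDmax : Dmax =
      Finset.univ.sup' (Finset.univ_nonempty_iff.mpr (Fin.pos_iff_nonempty.mp hm)) D)
    (hDmin : Dmin =
      Finset.univ.inf' (Finset.univ_nonempty_iff.mpr (Fin.pos_iff_nonempty.mp hm)) D)
    (A : ℝ) (hA : 0 ≤ A) (y : Fin m → ℝ) :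
    LRE X D y A ≤
      (Xᵀ * X).det ^ (-(1 : ℝ) / 2) * (A + Dmax) ^ ((p : ℝ) / 2) *
        (A + Dmin) ^ (-(m : ℝ) / 2) := by
  have hlower : ∀ i, A + Dmin ≤ A + D i := fun i => by
    linarith [hDmin ▸ Finset.inf'_le D (Finset.mem_univ i)]
  have hupper : ∀ i, A + D i ≤ A + Dmax := fun i => by
    linarith [hDmax ▸ Finset.le_sup' D (Finset.mem_univ i)]
  have hr : 0 < A + Dmin := by
    linarith [hDmin ▸ (Finset.lt_inf'_iff _).2 fun j _ => hD j]
  have hV : ∀ i, 0 < A + D i := fun i => hr.trans_le (hlower i)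
  have hq : 0 < A + Dmax := (hV ⟨0, hm⟩).trans_le (hupper _)
  have hX : Function.Injective X.mulVec :=
    mulVec_injective_of_rank_eq_card (hrank.trans (Fintype.card_fin p).symm)
  have hXX : 0 < (Xᵀ * X).det := (PosDef.conjTranspose_mul_self X hX).det_pos
  calc LRE X D y A
      ≤ ((A + Dmax)⁻¹ ^ p * (Xᵀ * X).det) ^ (-(1 : ℝ) / 2) * ((A + Dmin) ^ m) ^ (-(1 : ℝ) / 2) :=
        LRE_le_of_le_det y (by positivity)
          (inv_pow_mul_det_le_det_transpose_mul_Vmat_inv_mul X hq hV hupper) (by positivity)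
          (pow_le_det_Vmat_s9 hr.le hlower) (Pmat_posSemidef hX hV)
    _ = (Xᵀ * X).det ^ (-(1 : ℝ) / 2) * (A + Dmax) ^ ((p : ℝ) / 2) *
          (A + Dmin) ^ (-(m : ℝ) / 2) := by
        rw [mul_rpow (by positivity) hXX.le, ← rpow_natCast_mul (inv_nonneg.2 hq.le),
          ← rpow_natCast_mul hr.le, inv_rpow hq.le, ← rpow_neg hq.le]
        ring_nf

/-- Key inequality of Appendix A.2: for every `A ≥ 0` and every `y`,
`L_RE(A) ≤ det(XᵀX)^{−1/2}·(A+D_max)^{p/2}·(A+D_min)^{−m/2}`. -/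
theorem LRE_upper_bound {m p : ℕ} (hm : 0 < m) (hp : 0 < p)
    (X : Matrix (Fin m) (Fin p) ℝ) (hrank : X.rank = p)
    (D : Fin m → ℝ) (hD : ∀ j, 0 < D j)
    (Dmax Dmin : ℝ)
    (hDmax : Dmax =
      Finset.univ.sup' (Finset.univ_nonempty_iff.mpr (Fin.pos_iff_nonempty.mp hm)) D)
    (hDmin : Dmin =
      Finset.univ.inf' (Finset.univ_nonempty_iff.mpr (Fin.pos_iff_nonempty.mp hm)) D)
    (A : ℝ) (hA : 0 ≤ A) (y : Fin m → ℝ) :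
    LRE X D y A ≤
      (Xᵀ * X).det ^ (-(1 : ℝ) / 2) * (A + Dmax) ^ ((p : ℝ) / 2) *
        (A + Dmin) ^ (-(m : ℝ) / 2) :=
  LRE_upper_bound_general hm X hrank D hD Dmax Dmin hDmax hDmin A hA y
end
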